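/- arXiv:1704.08999 — 2 statements merged into one kernel-verified Lean document; each statement's English description precedes it below -/
import Mathlib

section
/- If f: ℝ^N → ℝ is a log-concave probability density function, then the function F(z) = ∫_{[z-1, z]} f(w) dw (the integral of f over the box with corners z - 1 and z, where 1 is the all-ones vector) is log-concave in z. -/
/-!
Fix `x`, `y`, `θ` and put `z = θ • x + (1 - θ) • y`. Since `θ [x - 1, x] + (1 - θ) [y - 1, y]`
lies in `[z - 1, z]`, log-concavity of `f` says that the restrictions `u`, `v`, `w` of `f` to the
three boxes satisfy `u a ^ θ * v b ^ (1 - θ) ≤ w (θ • a + (1 - θ) • b)`, the hypothesis of the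
Prékopa–Leindler inequality, whose conclusion `(∫ u) ^ θ * (∫ v) ^ (1 - θ) ≤ ∫ w` is the claim.

On `ℝ`, Prékopa–Leindler follows from the Brunn–Minkowski inequality `|A| + |B| ≤ |A + B|`: once `u`
and `v` are truncated and normalised to have supremum `1`, the superlevel sets satisfy
`θ {u > t} + (1 - θ) {v > t} ⊆ {w > t}` for `0 < t < 1`, and integrating over `t` gives
`θ ∫ u + (1 - θ) ∫ v ≤ ∫ w`, which dominates the geometric mean by AM–GM. It passes from `ℝ` and
`ℝⁿ` to `ℝ × ℝⁿ ≃ ℝⁿ⁺¹` by Fubini.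
-/

open MeasureTheory Set

/-- A nonnegative function is log-concave if
`f (θx + (1-θ)y) ≥ f x ^ θ * f y ^ (1-θ)` for all `x, y` and `θ ∈ (0,1)`. -/
def LogConcave {N : ℕ} (f : (Fin N → ℝ) → ℝ) : Prop :=
  (∀ x, 0 ≤ f x) ∧
    ∀ x y θ, θ ∈ Set.Ioo (0 : ℝ) 1 →
      f x ^ θ * f y ^ (1 - θ) ≤ f (θ • x + (1 - θ) • y)

open scoped ENNReal Pointwise

namespace Real

theorem volume_add_volume_le_volume_add_of_isCompact {K L : Set ℝ} (hK : IsCompact K)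
    (hL : IsCompact L) (hK₀ : K.Nonempty) (hL₀ : L.Nonempty) :
    volume K + volume L ≤ volume (K + L) := by
  set k := sSup K
  set l := sInf L
  -- the translates `l + K` and `k + L` of `K` and `L` inside `K + L` meet only at `k + l`
  have hunion : (l +ᵥ K) ∪ (k +ᵥ L) ⊆ K + L := by
    rintro _ (⟨a, ha, rfl⟩ | ⟨b, hb, rfl⟩)
    · simpa only [vadd_eq_add, add_comm l] using add_mem_add ha (hL.sInf_mem hL₀)
    · exact add_mem_add (hK.sSup_mem hK₀) hb
  have hinter : (l +ᵥ K) ∩ (k +ᵥ L) ⊆ {k + l} := by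
    rintro _ ⟨⟨a, ha, rfl⟩, ⟨b, hb, hab⟩⟩
    have hak : a ≤ k := le_csSup hK.bddAbove ha
    have hlb : l ≤ b := csInf_le hL.bddBelow hb
    simp only [vadd_eq_add, mem_singleton_iff] at hab ⊢
    linarith
  calc volume K + volume L = volume (l +ᵥ K) + volume (k +ᵥ L) := by
        rw [measure_vadd, measure_vadd]
    _ = volume ((l +ᵥ K) ∪ (k +ᵥ L)) + volume ((l +ᵥ K) ∩ (k +ᵥ L)) :=
        (measure_union_add_inter _ (hL.measurableSet.const_vadd k)).symm
    _ ≤ volume (K + L) + 0 := add_le_add (measure_mono hunion)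
        (measure_mono_null hinter (measure_singleton _)).le
    _ = volume (K + L) := add_zero _

theorem volume_add_volume_le_volume_add {s t : Set ℝ} (hs : MeasurableSet s)
    (ht : MeasurableSet t) (hs₀ : s.Nonempty) (ht₀ : t.Nonempty) :
    volume s + volume t ≤ volume (s + t) := by
  obtain ⟨a, ha⟩ := hs₀
  obtain ⟨b, hb⟩ := ht₀
  rw [hs.measure_eq_iSup_isCompact, ht.measure_eq_iSup_isCompact]
  simp_rw [iSup_and']
  refine ENNReal.biSup_add_biSup_le' ⟨{a}, by simpa using ha, isCompact_singleton⟩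
    ⟨{b}, by simpa using hb, isCompact_singleton⟩ fun K ⟨hKs, hK⟩ L ⟨hLt, hL⟩ => ?_
  calc volume K + volume L ≤ volume (insert a K) + volume (insert b L) :=
        add_le_add (measure_mono (subset_insert _ _)) (measure_mono (subset_insert _ _))
    _ ≤ volume (insert a K + insert b L) :=
        volume_add_volume_le_volume_add_of_isCompact (hK.insert a) (hL.insert b)
          (insert_nonempty _ _) (insert_nonempty _ _)
    _ ≤ volume (s + t) :=
        measure_mono (add_subset_add (insert_subset ha hKs) (insert_subset hb hLt))

end Real

theorem lintegral_min_one_eq_lintegral_measure_lt {α : Type*} [MeasurableSpace α]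
    {μ : Measure α} {h : α → ℝ≥0∞} (hh : AEMeasurable h μ) :
    ∫⁻ a, min (h a) 1 ∂μ = ∫⁻ t in Ioo (0 : ℝ) 1, μ {a | ENNReal.ofReal t < h a} := by
  have hfin : ∀ a, min (h a) 1 ≠ ∞ := fun a =>
    ne_top_of_le_ne_top ENNReal.one_ne_top (min_le_right _ _)
  have hlevel : ∀ t, 0 ≤ t →
      {a | t < (min (h a) 1).toReal} = {a | ENNReal.ofReal t < min (h a) 1} := by
    intro t ht
    ext a
    exact (ENNReal.ofReal_lt_iff_lt_toReal ht (hfin a)).symm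
  calc ∫⁻ a, min (h a) 1 ∂μ = ∫⁻ a, ENNReal.ofReal (min (h a) 1).toReal ∂μ := by
        simp_rw [ENNReal.ofReal_toReal (hfin _)]
    _ = ∫⁻ t in Ioi 0, μ {a | t < (min (h a) 1).toReal} :=
        lintegral_eq_lintegral_meas_lt μ (ae_of_all _ fun _ => ENNReal.toReal_nonneg)
          (hh.min aemeasurable_const).ennreal_toReal
    _ = ∫⁻ t in Ioo 0 1 ∪ Ici 1, μ {a | t < (min (h a) 1).toReal} := by
        rw [Ioo_union_Ici_eq_Ioi one_pos]
    _ = ∫⁻ t in Ioo (0 : ℝ) 1, μ {a | ENNReal.ofReal t < h a} := by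
        rw [lintegral_union measurableSet_Ici
          ((Iio_disjoint_Ici le_rfl).mono_left Ioo_subset_Iio_self)]
        have hfar : ∫⁻ t in Ici 1, μ {a | t < (min (h a) 1).toReal} = 0 := by
          refine setLIntegral_eq_zero measurableSet_Ici fun t (ht : 1 ≤ t) => ?_
          refine measure_mono_null (fun a (ha : t < _) => ?_) measure_empty
          have : (min (h a) 1).toReal ≤ 1 :=
            ENNReal.toReal_le_of_le_ofReal zero_le_one (by simp)
          exact (ha.trans_le this).not_ge ht
        rw [hfar, add_zero]
        refine setLIntegral_congr_fun measurableSet_Ioo fun t ht => ?_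
        simp only [hlevel t ht.1.le, lt_min_iff, ENNReal.ofReal_lt_one.2 ht.2, and_true]

theorem smul_add_smul_superlevel_subset {E : Type*} [AddCommMonoid E] [Module ℝ E]
    {f g h : E → ℝ≥0∞} {θ t : ℝ} (hθ : θ ∈ Ioo (0 : ℝ) 1) (ht : 0 < t)
    (hfgh : ∀ a b, f a ^ θ * g b ^ (1 - θ) ≤ h (θ • a + (1 - θ) • b)) :
    θ • {a | ENNReal.ofReal t < f a} + (1 - θ) • {b | ENNReal.ofReal t < g b} ⊆
      {c | ENNReal.ofReal t < h c} := by
  rintro _ ⟨_, ⟨a, ha, rfl⟩, _, ⟨b, hb, rfl⟩, rfl⟩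
  calc ENNReal.ofReal t = ENNReal.ofReal t ^ θ * ENNReal.ofReal t ^ (1 - θ) := by
        rw [← ENNReal.rpow_add _ _ (by simpa using ht) ENNReal.ofReal_ne_top, add_sub_cancel,
          ENNReal.rpow_one]
    _ < f a ^ θ * g b ^ (1 - θ) :=
        ENNReal.mul_lt_mul (ENNReal.rpow_lt_rpow ha hθ.1) (ENNReal.rpow_lt_rpow hb (sub_pos.2 hθ.2))
    _ ≤ h (θ • a + (1 - θ) • b) := hfgh a b

theorem ENNReal.rpow_mul_rpow_le_add {θ : ℝ} (hθ : θ ∈ Ioo (0 : ℝ) 1) (x y : ℝ≥0∞) :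
    x ^ θ * y ^ (1 - θ) ≤ ENNReal.ofReal θ * x + ENNReal.ofReal (1 - θ) * y := by
  have hθ' : 0 < 1 - θ := sub_pos.2 hθ.2
  have := ENNReal.young_inequality (x ^ θ) (y ^ (1 - θ))
    (Real.HolderConjugate.inv_one_sub_inv hθ.1 hθ.2)
  rwa [ENNReal.rpow_rpow_inv hθ.1.ne', ENNReal.rpow_rpow_inv hθ'.ne', div_eq_mul_inv,
    div_eq_mul_inv, ENNReal.ofReal_inv_of_pos hθ.1, ENNReal.ofReal_inv_of_pos hθ', inv_inv,
    inv_inv, mul_comm x, mul_comm y] at this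

theorem AEMeasurable.exists_measurable_ge_ae_eq {α β : Type*} [MeasurableSpace α]
    [MeasurableSpace β] [Preorder β] [OrderTop β] {μ : Measure α} {h : α → β}
    (hh : AEMeasurable h μ) : ∃ h₀ : α → β, Measurable h₀ ∧ h ≤ h₀ ∧ h₀ =ᵐ[μ] h := by
  classical
  set s := toMeasurable μ {a | h a ≠ hh.mk h a}
  have hs : μ s = 0 := by rw [measure_toMeasurable]; exact hh.ae_eq_mk
  refine ⟨s.piecewise (fun _ => ⊤) (hh.mk h),
    measurable_const.piecewise (measurableSet_toMeasurable _ _) hh.measurable_mk, fun a => ?_, ?_⟩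
  · by_cases ha : a ∈ s
    · simp [piecewise_eq_of_mem _ _ _ ha]
    · rw [piecewise_eq_of_notMem _ _ _ ha]
      exact (not_not.1 fun hne => ha (subset_toMeasurable _ _ hne)).le
  · filter_upwards [measure_eq_zero_iff_ae_notMem.1 hs, hh.ae_eq_mk] with a ha hmk
    rw [piecewise_eq_of_notMem _ _ _ ha, hmk]

section PrekopaLeindler

variable {E F : Type*} [AddCommMonoid E] [Module ℝ E] [MeasurableSpace E]
  [AddCommMonoid F] [Module ℝ F] [MeasurableSpace F]

def PrekopaLeindler (μ : Measure E) : Prop :=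
  ∀ ⦃f g h : E → ℝ≥0∞⦄, Measurable f → Measurable g → Measurable h →
    ∀ ⦃θ : ℝ⦄, θ ∈ Ioo (0 : ℝ) 1 → (∀ a b, f a ^ θ * g b ^ (1 - θ) ≤ h (θ • a + (1 - θ) • b)) →
      (∫⁻ a, f a ∂μ) ^ θ * (∫⁻ b, g b ∂μ) ^ (1 - θ) ≤ ∫⁻ c, h c ∂μ

theorem prekopaLeindler_dirac (x : E) : PrekopaLeindler (Measure.dirac x) := by
  intro f g h hf hg hh θ _ hfgh
  simpa [lintegral_dirac' _ hf, lintegral_dirac' _ hg, lintegral_dirac' _ hh,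
    Convex.combo_self (add_sub_cancel θ 1)] using hfgh x x

theorem PrekopaLeindler.prod {μ : Measure E} {ν : Measure F} [SFinite ν]
    (hμ : PrekopaLeindler μ) (hν : PrekopaLeindler ν) : PrekopaLeindler (μ.prod ν) := by
  intro f g h hf hg hh θ hθ hfgh
  rw [lintegral_prod _ hf.aemeasurable, lintegral_prod _ hg.aemeasurable,
    lintegral_prod _ hh.aemeasurable]
  refine hμ hf.lintegral_prod_right' hg.lintegral_prod_right' hh.lintegral_prod_right' hθ
    fun x y => hν (hf.comp measurable_prodMk_left) (hg.comp measurable_prodMk_left)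
      (hh.comp measurable_prodMk_left) hθ fun a b => ?_
  simpa using hfgh (x, a) (y, b)

theorem PrekopaLeindler.map {μ : Measure E} (hμ : PrekopaLeindler μ) (L : E →ₗ[ℝ] F)
    (hL : Measurable L) : PrekopaLeindler (μ.map L) := by
  intro f g h hf hg hh θ hθ hfgh
  rw [lintegral_map hf hL, lintegral_map hg hL, lintegral_map hh hL]
  exact hμ (hf.comp hL) (hg.comp hL) (hh.comp hL) hθ fun a b => by simpa using hfgh (L a) (L b)

theorem PrekopaLeindler.lintegral_rpow_mul_lintegral_rpow_le {μ : Measure E}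
    (hμ : PrekopaLeindler μ) {f g h : E → ℝ≥0∞} (hh : AEMeasurable h μ) {θ : ℝ}
    (hθ : θ ∈ Ioo (0 : ℝ) 1) (hfgh : ∀ a b, f a ^ θ * g b ^ (1 - θ) ≤ h (θ • a + (1 - θ) • b)) :
    (∫⁻ a, f a ∂μ) ^ θ * (∫⁻ b, g b ∂μ) ^ (1 - θ) ≤ ∫⁻ c, h c ∂μ := by
  obtain ⟨f₀, hf₀, hf₀f, hf₀_eq⟩ := exists_measurable_le_lintegral_eq μ f
  obtain ⟨g₀, hg₀, hg₀g, hg₀_eq⟩ := exists_measurable_le_lintegral_eq μ g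
  obtain ⟨h₀, hh₀, hhh₀, hh₀_eq⟩ := hh.exists_measurable_ge_ae_eq
  rw [hf₀_eq, hg₀_eq, ← lintegral_congr_ae hh₀_eq]
  refine hμ hf₀ hg₀ hh₀ hθ fun a b => le_trans ?_ ((hfgh a b).trans (hhh₀ _))
  exact mul_le_mul' (ENNReal.rpow_le_rpow (hf₀f a) hθ.1.le)
    (ENNReal.rpow_le_rpow (hg₀g b) (sub_pos.2 hθ.2).le)

end PrekopaLeindler

namespace Real

theorem add_volume_superlevel_le {f g h : ℝ → ℝ≥0∞} (hf : Measurable f) (hg : Measurable g)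
    {θ t : ℝ} (hθ : θ ∈ Ioo (0 : ℝ) 1) (ht : t ∈ Ioo (0 : ℝ) 1) (hf₁ : ⨆ a, f a = 1)
    (hg₁ : ⨆ b, g b = 1) (hfgh : ∀ a b, f a ^ θ * g b ^ (1 - θ) ≤ h (θ • a + (1 - θ) • b)) :
    ENNReal.ofReal θ * volume {a | ENNReal.ofReal t < f a} +
        ENNReal.ofReal (1 - θ) * volume {b | ENNReal.ofReal t < g b} ≤
      volume {c | ENNReal.ofReal t < h c} := by
  have hθ' : 0 < 1 - θ := sub_pos.2 hθ.2
  have hsmul : ∀ {c : ℝ}, 0 < c → ∀ s : Set ℝ, volume (c • s) = ENNReal.ofReal c * volume s :=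
    fun hc s => by simp [Measure.addHaar_smul, abs_of_pos hc]
  have hlt : ENNReal.ofReal t < 1 := ENNReal.ofReal_lt_one.2 ht.2
  obtain ⟨a, ha⟩ := lt_iSup_iff.1 (hf₁ ▸ hlt)
  obtain ⟨b, hb⟩ := lt_iSup_iff.1 (hg₁ ▸ hlt)
  rw [← hsmul hθ.1, ← hsmul hθ']
  calc _ ≤ _ := volume_add_volume_le_volume_add
        ((measurableSet_lt measurable_const hf).const_smul_of_ne_zero hθ.1.ne')
        ((measurableSet_lt measurable_const hg).const_smul_of_ne_zero hθ'.ne')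
        ⟨θ • a, smul_mem_smul_set ha⟩ ⟨(1 - θ) • b, smul_mem_smul_set hb⟩
    _ ≤ _ := measure_mono (smul_add_smul_superlevel_subset hθ ht.1 hfgh)

theorem add_lintegral_le_lintegral_of_iSup_eq_one {f g h : ℝ → ℝ≥0∞} (hf : Measurable f)
    (hg : Measurable g) (hh : Measurable h) {θ : ℝ} (hθ : θ ∈ Ioo (0 : ℝ) 1)
    (hf₁ : ⨆ a, f a = 1) (hg₁ : ⨆ b, g b = 1)
    (hfgh : ∀ a b, f a ^ θ * g b ^ (1 - θ) ≤ h (θ • a + (1 - θ) • b)) :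
    ENNReal.ofReal θ * (∫⁻ a, f a) + ENNReal.ofReal (1 - θ) * ∫⁻ b, g b ≤ ∫⁻ c, h c := by
  have hmeas : ∀ F : ℝ → ℝ≥0∞, Measurable fun t : ℝ => volume {a | ENNReal.ofReal t < F a} :=
    fun F => Antitone.measurable fun s t hst =>
      measure_mono fun a ha => (ENNReal.ofReal_le_ofReal hst).trans_lt ha
  have hlayer : ∀ F : ℝ → ℝ≥0∞, Measurable F → ⨆ a, F a = 1 →
      ∫⁻ a, F a = ∫⁻ t in Ioo (0 : ℝ) 1, volume {a | ENNReal.ofReal t < F a} := fun F hF hF₁ => by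
    rw [← lintegral_min_one_eq_lintegral_measure_lt hF.aemeasurable]
    exact lintegral_congr fun a => (min_eq_left (hF₁ ▸ le_iSup F a)).symm
  calc ENNReal.ofReal θ * (∫⁻ a, f a) + ENNReal.ofReal (1 - θ) * ∫⁻ b, g b
      = ∫⁻ t in Ioo (0 : ℝ) 1, (ENNReal.ofReal θ * volume {a | ENNReal.ofReal t < f a} +
          ENNReal.ofReal (1 - θ) * volume {b | ENNReal.ofReal t < g b}) := by
        rw [hlayer f hf hf₁, hlayer g hg hg₁, lintegral_add_left ((hmeas f).const_mul _),
          lintegral_const_mul _ (hmeas f), lintegral_const_mul _ (hmeas g)]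
    _ ≤ ∫⁻ t in Ioo (0 : ℝ) 1, volume {c | ENNReal.ofReal t < h c} :=
        setLIntegral_mono' measurableSet_Ioo fun t ht =>
          add_volume_superlevel_le hf hg hθ ht hf₁ hg₁ hfgh
    _ = ∫⁻ c, min (h c) 1 := (lintegral_min_one_eq_lintegral_measure_lt hh.aemeasurable).symm
    _ ≤ ∫⁻ c, h c := lintegral_mono fun c => min_le_left _ _

theorem lintegral_rpow_mul_lintegral_rpow_le_of_iSup_ne_top {f g h : ℝ → ℝ≥0∞}
    (hf : Measurable f) (hg : Measurable g) (hh : Measurable h) {θ : ℝ} (hθ : θ ∈ Ioo (0 : ℝ) 1)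
    (hf_top : ⨆ a, f a ≠ ∞) (hg_top : ⨆ b, g b ≠ ∞)
    (hfgh : ∀ a b, f a ^ θ * g b ^ (1 - θ) ≤ h (θ • a + (1 - θ) • b)) :
    (∫⁻ a, f a) ^ θ * (∫⁻ b, g b) ^ (1 - θ) ≤ ∫⁻ c, h c := by
  have hθ' : 0 < 1 - θ := sub_pos.2 hθ.2
  set M := ⨆ a, f a
  set N := ⨆ b, g b
  rcases eq_or_ne M 0 with hM | hM
  · simp [show f = 0 from funext (ENNReal.iSup_eq_zero.1 hM), ENNReal.zero_rpow_of_pos hθ.1]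
  rcases eq_or_ne N 0 with hN | hN
  · simp [show g = 0 from funext (ENNReal.iSup_eq_zero.1 hN), ENNReal.zero_rpow_of_pos hθ']
  -- normalise `f`, `g` to have supremum `1`, and `h` by the matching factor `C`
  set C := M ^ θ * N ^ (1 - θ)
  have hMθ : M ^ θ ≠ 0 := (ENNReal.rpow_pos (pos_iff_ne_zero.2 hM) hf_top).ne'
  have hC₀ : C ≠ 0 := mul_ne_zero hMθ (ENNReal.rpow_pos (pos_iff_ne_zero.2 hN) hg_top).ne'
  have hC_top : C ≠ ∞ := ENNReal.mul_ne_top (ENNReal.rpow_ne_top_of_nonneg hθ.1.le hf_top)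
    (ENNReal.rpow_ne_top_of_nonneg hθ'.le hg_top)
  have hscale : ∀ X Y : ℝ≥0∞,
      (M⁻¹ * X) ^ θ * (N⁻¹ * Y) ^ (1 - θ) = C⁻¹ * (X ^ θ * Y ^ (1 - θ)) := by
    intro X Y
    rw [ENNReal.mul_rpow_of_nonneg _ _ hθ.1.le, ENNReal.mul_rpow_of_nonneg _ _ hθ'.le,
      ENNReal.inv_rpow, ENNReal.inv_rpow,
      ENNReal.mul_inv (Or.inl hMθ) (Or.inl (ENNReal.rpow_ne_top_of_nonneg hθ.1.le hf_top))]
    ring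
  have hnorm : ∀ F : ℝ → ℝ≥0∞, ⨆ a, F a ≠ 0 → ⨆ a, F a ≠ ∞ → ⨆ a, (⨆ a, F a)⁻¹ * F a = 1 :=
    fun F h₀ h_top => by rw [← ENNReal.mul_iSup, ENNReal.inv_mul_cancel h₀ h_top]
  have key := add_lintegral_le_lintegral_of_iSup_eq_one (hf.const_mul M⁻¹) (hg.const_mul N⁻¹)
    (hh.const_mul C⁻¹) hθ (hnorm f hM hf_top) (hnorm g hN hg_top) fun a b => by
      rw [hscale]
      gcongr
      exact hfgh a b
  rw [lintegral_const_mul _ hf, lintegral_const_mul _ hg, lintegral_const_mul _ hh] at key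
  calc (∫⁻ a, f a) ^ θ * (∫⁻ b, g b) ^ (1 - θ)
      = C * ((M⁻¹ * ∫⁻ a, f a) ^ θ * (N⁻¹ * ∫⁻ b, g b) ^ (1 - θ)) := by
        rw [hscale, ENNReal.mul_inv_cancel_left hC₀ hC_top]
    _ ≤ C * (C⁻¹ * ∫⁻ c, h c) := by
        gcongr C * ?_
        exact (ENNReal.rpow_mul_rpow_le_add hθ _ _).trans key
    _ = ∫⁻ c, h c := ENNReal.mul_inv_cancel_left hC₀ hC_top

end Real

theorem prekopaLeindler_volume_real : PrekopaLeindler (volume : Measure ℝ) := by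
  intro f g h hf hg hh θ hθ hfgh
  have hθ' : 0 < 1 - θ := sub_pos.2 hθ.2
  have htrunc : ∀ m n : ℕ,
      (∫⁻ a, min (f a) m) ^ θ * (∫⁻ b, min (g b) n) ^ (1 - θ) ≤ ∫⁻ c, h c := fun m n =>
    Real.lintegral_rpow_mul_lintegral_rpow_le_of_iSup_ne_top (hf.min measurable_const)
      (hg.min measurable_const) hh hθ
      (ne_top_of_le_ne_top (ENNReal.natCast_ne_top m) (iSup_le fun _ => min_le_right _ _))
      (ne_top_of_le_ne_top (ENNReal.natCast_ne_top n) (iSup_le fun _ => min_le_right _ _))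
      fun a b => (mul_le_mul' (ENNReal.rpow_le_rpow (min_le_left _ _) hθ.1.le)
        (ENNReal.rpow_le_rpow (min_le_left _ _) hθ'.le)).trans (hfgh a b)
  have hlim : ∀ F : ℝ → ℝ≥0∞, Measurable F → ∫⁻ a, F a = ⨆ n : ℕ, ∫⁻ a, min (F a) n :=
    fun F hF => by
      rw [← lintegral_iSup (fun n => hF.min measurable_const)
        fun m n hmn a => min_le_min_left _ (Nat.cast_le.2 hmn)]
      congr with a
      rw [← inf_iSup_eq, ENNReal.iSup_natCast, inf_top_eq]
  rw [hlim f hf, hlim g hg, ← ENNReal.orderIsoRpow_apply θ hθ.1,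
    ← ENNReal.orderIsoRpow_apply (1 - θ) hθ', OrderIso.map_iSup, OrderIso.map_iSup,
    ENNReal.iSup_mul]
  exact iSup_le fun m => (ENNReal.mul_iSup _ _).trans_le (iSup_le (htrunc m))

theorem prekopaLeindler_volume_pi (n : ℕ) : PrekopaLeindler (volume : Measure (Fin n → ℝ)) := by
  induction n with
  | zero =>
    rw [volume_pi, Measure.pi_of_empty]
    exact prekopaLeindler_dirac _
  | succ n ih =>
    have hcons : ⇑(MeasurableEquiv.piFinSuccAbove (fun _ : Fin (n + 1) => ℝ) 0).symm =
        Fin.consLinearEquiv ℝ fun _ : Fin (n + 1) => ℝ := by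
      ext x i
      simp [MeasurableEquiv.piFinSuccAbove_symm_apply]
    rw [← (volume_preserving_piFinSuccAbove (fun _ : Fin (n + 1) => ℝ) 0).symm.map_eq, hcons]
    exact (prekopaLeindler_volume_real.prod ih).map _
      (LinearMap.continuous_of_finiteDimensional _).measurable

theorem smul_add_smul_mem_Icc_sub {E : Type*} [AddCommGroup E] [PartialOrder E]
    [IsOrderedAddMonoid E] [Module ℝ E] [PosSMulMono ℝ E] {θ : ℝ} (hθ : θ ∈ Icc (0 : ℝ) 1)
    {c x y a b : E} (ha : a ∈ Icc (x - c) x) (hb : b ∈ Icc (y - c) y) :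
    θ • a + (1 - θ) • b ∈ Icc (θ • x + (1 - θ) • y - c) (θ • x + (1 - θ) • y) := by
  have hθ' : 0 ≤ 1 - θ := sub_nonneg.2 hθ.2
  refine ⟨?_, add_le_add (smul_le_smul_of_nonneg_left ha.2 hθ.1)
    (smul_le_smul_of_nonneg_left hb.2 hθ')⟩
  calc θ • x + (1 - θ) • y - c = θ • (x - c) + (1 - θ) • (y - c) := by module
    _ ≤ θ • a + (1 - θ) • b := add_le_add (smul_le_smul_of_nonneg_left ha.1 hθ.1)
        (smul_le_smul_of_nonneg_left hb.1 hθ')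

theorem LogConcave.indicator_rpow_mul_indicator_rpow_le {N : ℕ} {f : (Fin N → ℝ) → ℝ}
    (hf : LogConcave f) {θ : ℝ} (hθ : θ ∈ Ioo (0 : ℝ) 1) {s t u : Set (Fin N → ℝ)}
    (hstu : ∀ a ∈ s, ∀ b ∈ t, θ • a + (1 - θ) • b ∈ u) (a b : Fin N → ℝ) :
    s.indicator (fun w => ENNReal.ofReal (f w)) a ^ θ *
        t.indicator (fun w => ENNReal.ofReal (f w)) b ^ (1 - θ) ≤
      u.indicator (fun w => ENNReal.ofReal (f w)) (θ • a + (1 - θ) • b) := by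
  have hθ' : 0 < 1 - θ := sub_pos.2 hθ.2
  by_cases ha : a ∈ s
  · by_cases hb : b ∈ t
    · rw [indicator_of_mem ha, indicator_of_mem hb, indicator_of_mem (hstu a ha b hb),
        ENNReal.ofReal_rpow_of_nonneg (hf.1 a) hθ.1.le,
        ENNReal.ofReal_rpow_of_nonneg (hf.1 b) hθ'.le,
        ← ENNReal.ofReal_mul (Real.rpow_nonneg (hf.1 a) θ)]
      exact ENNReal.ofReal_le_ofReal (hf.2 a b θ hθ)
    · simp [indicator_of_notMem hb, ENNReal.zero_rpow_of_pos hθ']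
  · simp [indicator_of_notMem ha, ENNReal.zero_rpow_of_pos hθ.1]

theorem logConcave_box_integral_general {N : ℕ} (f : (Fin N → ℝ) → ℝ)
    (hf : LogConcave f) (hint : Integrable f) :
    LogConcave (fun z => ∫ w in Set.Icc (z - 1) z, f w) := by
  set F : (Fin N → ℝ) → (Fin N → ℝ) → ℝ≥0∞ :=
    fun z => (Icc (z - 1) z).indicator fun w => ENNReal.ofReal (f w)
  have hF : ∀ z, ∫ w in Icc (z - 1) z, f w = (∫⁻ w, F z w).toReal := fun z => by
    rw [lintegral_indicator measurableSet_Icc,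
      integral_eq_lintegral_of_nonneg_ae (ae_of_all _ fun w => hf.1 w) hint.1.restrict]
  have hF_top : ∀ z, ∫⁻ w, F z w ≠ ∞ := fun z =>
    ne_top_of_le_ne_top hint.lintegral_lt_top.ne (lintegral_mono fun w => indicator_le_self _ _ w)
  refine ⟨fun z => setIntegral_nonneg measurableSet_Icc fun w _ => hf.1 w, fun x y θ hθ => ?_⟩
  simp only [hF, ENNReal.toReal_rpow, ← ENNReal.toReal_mul]
  refine ENNReal.toReal_mono (hF_top _)
    ((prekopaLeindler_volume_pi N).lintegral_rpow_mul_lintegral_rpow_le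
      ((ENNReal.measurable_ofReal.comp_aemeasurable hint.1.aemeasurable).indicator
        measurableSet_Icc) hθ
      (hf.indicator_rpow_mul_indicator_rpow_le hθ fun a ha b hb =>
        smul_add_smul_mem_Icc_sub (Ioo_subset_Icc_self hθ) ha hb))

/-- If `f` is a log-concave probability density on `ℝ^N`, then
`F z = ∫_{[z-1,z]} f` is log-concave in `z`. -/
theorem logConcave_box_integral {N : ℕ} (f : (Fin N → ℝ) → ℝ)
    (hf : LogConcave f) (hint : Integrable f) (hprob : ∫ x, f x = 1) :
    LogConcave (fun z => ∫ w in Set.Icc (z - 1) z, f w) :=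
  logConcave_box_integral_general f hf hint
end

section
/- In a radial (tree) distribution network, the matrix R defined by R_{ik} = Σ_{(h,l) ∈ P_i ∩ P_k} r_{hl}, where P_i is the set of edges on the unique path from the root to node i and r_{hl} > 0 are edge weights, is symmetric positive definite. -/
/-!
With the edge–node incidence matrix `A e i = [e ∈ P i]` one has `R = Aᵀ diag(r) A`.
Since every edge on the path to `i` has index at most `i` and `i ∈ P i`, `A` is upper
unitriangular, hence invertible, and a congruence of the positive diagonal matrix `diag(r)`
by an invertible matrix is positive definite.
-/

open Matrix

namespace Matrix

variable {ι κ : Type*}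

def pathIncidence (R : Type*) [DecidableEq κ] [Zero R] [One R] (P : ι → Finset κ) :
    Matrix κ ι R :=
  of fun e i => if e ∈ P i then 1 else 0

theorem of_sum_inter_eq_transpose_mul_diagonal_mul_pathIncidence {R : Type*} [Fintype κ]
    [DecidableEq κ] [NonAssocSemiring R] (P : ι → Finset κ) (r : κ → R) :
    of (fun i k => ∑ e ∈ P i ∩ P k, r e) =
      (pathIncidence R P)ᵀ * diagonal r * pathIncidence R P := by
  ext i k
  rw [mul_apply, of_apply, ← Finset.univ_inter (P i ∩ P k), ← Finset.sum_ite_mem]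
  refine Finset.sum_congr rfl fun e _ => ?_
  by_cases hi : e ∈ P i <;> by_cases hk : e ∈ P k <;> simp [pathIncidence, hi, hk]

theorem det_pathIncidence (R : Type*) [CommRing R] [Fintype ι] [LinearOrder ι]
    (P : ι → Finset ι) (h_self : ∀ i, i ∈ P i) (h_order : ∀ i j, i ∈ P j → i ≤ j) :
    (pathIncidence R P).det = 1 := by
  have hupper : (pathIncidence R P).IsUpperTriangular := fun e i hie =>
    if_neg fun h => (h_order e i h).not_gt hie
  rw [det_of_isUpperTriangular hupper]
  simp [pathIncidence, h_self]

end Matrix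

theorem tree_path_matrix_posDef_general {N : ℕ} (P : Fin N → Finset (Fin N))
    (h_self : ∀ i, i ∈ P i) (h_order : ∀ i j, i ∈ P j → i ≤ j)
    (r : Fin N → ℝ) (hr : ∀ e, 0 < r e) :
    (Matrix.of fun i k : Fin N => ∑ e ∈ P i ∩ P k, r e).PosDef := by
  have hunit : IsUnit (pathIncidence ℝ P) := by
    simp [isUnit_iff_isUnit_det, det_pathIncidence ℝ P h_self h_order]
  rw [of_sum_inter_eq_transpose_mul_diagonal_mul_pathIncidence,
    ← conjTranspose_eq_transpose_of_trivial]
  exact (PosDef.diagonal hr).conjTranspose_mul_mul_same (mulVec_injective_of_isUnit hunit)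

/-- In a tree network rooted at bus `0` with nodes numbered so that every edge on the path
to node `j` has index at most `j` (edge `i` being the edge directly above node `i`, so
`i ∈ P i`), the matrix `R_{ik} = Σ_{e ∈ P_i ∩ P_k} r_e` with positive edge weights is
symmetric positive definite. -/
theorem tree_path_matrix_posDef {N : ℕ} (P : Fin N → Finset (Fin N))
    (h_self : ∀ i, i ∈ P i) (h_order : ∀ i j, i ∈ P j → i ≤ j)
    (h_path : ∀ i j, i ∈ P j → P i ⊆ P j)
    (r : Fin N → ℝ) (hr : ∀ e, 0 < r e) :
    (Matrix.of fun i k : Fin N => ∑ e ∈ P i ∩ P k, r e).PosDef :=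
  tree_path_matrix_posDef_general P h_self h_order r hr
end
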